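/- Let sl₂(ℂ[X]) be the Lie algebra of 2×2 trace-zero matrices over the polynomial ring ℂ[X] with bracket [A,B] = AB − BA, and set y = E₁₂, z = E₂₁, h = E₁₁ − E₂₂. For u ∈ ℂ let M(u) = −(1/2)y + (1/2)X·z + (1/3)u·z. Define g^1 to be the Lie subalgebra generated by all differences M(u) − M(u'), and inductively g^{k+1} the Lie subalgebra generated by g^k together with all [x, M(u)], x ∈ g^k, u ∈ ℂ. Then g^1 = ℂ·z, g^2 = span_ℂ{z, h}, and g^3 = sl₂(ℂ[X]) (the whole Lie algebra). -/

import Mathlib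

/-!
Differences `M u - M u'` are multiples of `z`, so `g¹ = ℂ z`. As `⁅z, M u⁆ = ½ h` and
`⁅z, h⁆ = 2 z`, the span of `z, h` is already a Lie subalgebra and equals `g²`. In `g³`,
`⁅h, M 0⁆ = -(y + X z)`, and since `y`, `X z` have `h`-weights `2`, `-2` both lie in `g³`.
Then `⁅Xⁿ y, X z⁆ = Xⁿ⁺¹ h`, and `ad (Xⁿ⁺¹ h)` multiplies `y`, `z` by `±2 Xⁿ⁺¹`, so `g³`
contains `p y`, `p z`, `p h` for every polynomial `p`: it is all of `sl₂(ℂ[X])`.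
-/

open Polynomial Matrix

attribute [local instance 100] LieRing.ofAssociativeRing

namespace LieSubalgebra

variable {R L : Type*} [CommRing R] [LieRing L] [LieAlgebra R L]

theorem toSubmodule_lieSpan_eq {s : Set L} {p : Submodule R L}
    (hp : ∀ x ∈ p, ∀ y ∈ p, ⁅x, y⁆ ∈ p) (hsp : s ⊆ p)
    (hps : p ≤ (lieSpan R L s).toSubmodule) :
    (lieSpan R L s).toSubmodule = p :=
  le_antisymm (lieSpan_le (K := { p with lie_mem' := fun hx hy => hp _ hx _ hy }).2 hsp) hps

/-- The step `gᵏ ↦ gᵏ⁺¹` of Definition 3.1. -/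
def adjoinLieBrackets {ι : Type*} (M : ι → L) (g : LieSubalgebra R L) : LieSubalgebra R L :=
  lieSpan R L ((g : Set L) ∪ {a | ∃ x ∈ g, ∃ u, a = ⁅x, M u⁆})

variable {ι : Type*} {M : ι → L} {g : LieSubalgebra R L}

theorem le_adjoinLieBrackets : g ≤ g.adjoinLieBrackets M :=
  fun _ hx => subset_lieSpan (Or.inl hx)

theorem lie_mem_adjoinLieBrackets {x : L} (hx : x ∈ g) (u : ι) :
    ⁅x, M u⁆ ∈ g.adjoinLieBrackets M :=
  subset_lieSpan (Or.inr ⟨x, hx, u, rfl⟩)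

theorem toSubmodule_adjoinLieBrackets_eq {p : Submodule R L}
    (hp : ∀ x ∈ p, ∀ y ∈ p, ⁅x, y⁆ ∈ p) (hgp : g.toSubmodule ≤ p)
    (hMp : ∀ x ∈ g, ∀ u, ⁅x, M u⁆ ∈ p) (hpg : p ≤ (g.adjoinLieBrackets M).toSubmodule) :
    (g.adjoinLieBrackets M).toSubmodule = p := by
  refine toSubmodule_lieSpan_eq hp ?_ hpg
  rintro a (ha | ⟨x, hx, u, rfl⟩)
  exacts [hgp ha, hMp x hx u]

end LieSubalgebra

namespace Submodule

variable {R L : Type*} [CommRing R] [LieRing L] [LieAlgebra R L]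

theorem lie_mem_span_singleton {a x y : L} (hx : x ∈ span R {a}) (hy : y ∈ span R {a}) :
    ⁅x, y⁆ ∈ span R {a} := by
  obtain ⟨c, rfl⟩ := mem_span_singleton.1 hx
  obtain ⟨d, rfl⟩ := mem_span_singleton.1 hy
  simp

theorem lie_mem_span_pair {a b x y : L} (hab : ⁅a, b⁆ ∈ span R {a, b})
    (hx : x ∈ span R {a, b}) (hy : y ∈ span R {a, b}) :
    ⁅x, y⁆ ∈ span R {a, b} := by
  obtain ⟨c, d, rfl⟩ := mem_span_pair.1 hx
  obtain ⟨e, f, rfl⟩ := mem_span_pair.1 hy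
  have hba : ⁅b, a⁆ ∈ span R {a, b} := by rw [← lie_skew]; exact neg_mem hab
  simp only [add_lie, lie_add, smul_lie, lie_smul, lie_self, smul_zero, zero_add, add_zero]
  exact add_mem (smul_mem _ _ (smul_mem _ _ hba)) (smul_mem _ _ (smul_mem _ _ hab))

end Submodule

theorem Polynomial.smul_mem_of_forall_X_pow_smul_mem {K M : Type*} [CommSemiring K]
    [AddCommMonoid M] [Module K[X] M] [Module K M] [IsScalarTower K K[X] M]
    {S : Submodule K M} {m : M} (h : ∀ n : ℕ, (X : K[X]) ^ n • m ∈ S) (p : K[X]) :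
    p • m ∈ S := by
  induction p using Polynomial.induction_on' with
  | add p q hp hq => rw [add_smul]; exact add_mem hp hq
  | monomial n a =>
    rw [← C_mul_X_pow_eq_monomial, ← smul_eq_C_mul, smul_assoc]
    exact S.smul_mem a (h n)

namespace Matrix

variable {R : Type*} [CommRing R]

theorem isSl2Triple_single [Nontrivial R] :
    IsSl2Triple (single 0 0 1 - single 1 1 1 : Matrix (Fin 2) (Fin 2) R)
      (single 0 1 1) (single 1 0 1) where
  h_ne_zero h := by simpa using congrFun (congrFun h 0) 0
  lie_e_f := by ext i j; fin_cases i <;> fin_cases j <;> simp [Ring.lie_def, single, mul_apply]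
  lie_h_e_nsmul := by
    ext i j; fin_cases i <;> fin_cases j <;> simp [Ring.lie_def, single, mul_apply]; norm_num
  lie_h_f_nsmul := by
    ext i j; fin_cases i <;> fin_cases j <;> simp [Ring.lie_def, single, mul_apply]; norm_num

theorem eta_fin_two_of_trace_eq_zero {A : Matrix (Fin 2) (Fin 2) R} (hA : A.trace = 0) :
    A = A 0 1 • single 0 1 1 + A 1 0 • single 1 0 1 + A 0 0 • (single 0 0 1 - single 1 1 1) := by
  rw [trace_fin_two, add_eq_zero_iff_eq_neg'] at hA
  ext i j; fin_cases i <;> fin_cases j <;> simp [single, hA]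

end Matrix

section Generation

variable {K : Type*} [Field K] [NeZero (2 : K)]

local notation "e" => (single 0 1 1 : Matrix (Fin 2) (Fin 2) K[X])
local notation "f" => (single 1 0 1 : Matrix (Fin 2) (Fin 2) K[X])
local notation "h" => (single 0 0 1 - single 1 1 1 : Matrix (Fin 2) (Fin 2) K[X])

theorem X_pow_smul_mem_of_mem {L : LieSubalgebra K (Matrix (Fin 2) (Fin 2) K[X])}
    (he : e ∈ L) (hf : f ∈ L) (hXf : (X : K[X]) • f ∈ L) (n : ℕ) :
    (X : K[X]) ^ n • e ∈ L ∧ (X : K[X]) ^ n • f ∈ L ∧ (X : K[X]) ^ n • h ∈ L := by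
  have t := isSl2Triple_single (R := K[X])
  induction n with
  | zero => simpa [← t.lie_e_f] using ⟨he, hf, L.lie_mem he hf⟩
  | succ n ih =>
    have hh : (X : K[X]) ^ (n + 1) • h ∈ L := by
      have : ⁅(X : K[X]) ^ n • e, (X : K[X]) • f⁆ = (X : K[X]) ^ (n + 1) • h := by
        rw [smul_lie, lie_smul, t.lie_e_f, smul_smul, ← pow_succ]
      exact this ▸ L.lie_mem ih.1 hXf
    have he' : ⁅(X : K[X]) ^ (n + 1) • h, e⁆ = (2 : K) • (X : K[X]) ^ (n + 1) • e := by
      rw [smul_lie, t.lie_h_e_smul K, smul_comm]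
    have hf' : ⁅(X : K[X]) ^ (n + 1) • h, f⁆ = (-2 : K) • (X : K[X]) ^ (n + 1) • f := by
      rw [smul_lie, t.lie_lie_smul_f K, smul_neg, smul_comm, neg_smul]
    refine ⟨?_, ?_, hh⟩
    · simpa only [he', smul_smul, inv_mul_cancel₀ (two_ne_zero (α := K)), one_smul]
        using L.smul_mem (2⁻¹ : K) (L.lie_mem hh he)
    · simpa only [hf', smul_smul, neg_mul_neg, inv_mul_cancel₀ (two_ne_zero (α := K)), one_smul]
        using L.smul_mem (-2⁻¹ : K) (L.lie_mem hh hf)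

theorem ker_traceLinearMap_le_of_mem {L : LieSubalgebra K (Matrix (Fin 2) (Fin 2) K[X])}
    (he : e ∈ L) (hf : f ∈ L) (hXf : (X : K[X]) • f ∈ L) :
    LinearMap.ker (traceLinearMap (Fin 2) K K[X]) ≤ L.toSubmodule := by
  have hpow := X_pow_smul_mem_of_mem he hf hXf
  intro A hA
  rw [eta_fin_two_of_trace_eq_zero hA]
  refine add_mem (add_mem ?_ ?_) ?_ <;>
    refine smul_mem_of_forall_X_pow_smul_mem (S := L.toSubmodule) (fun n => ?_) _
  exacts [(hpow n).1, (hpow n).2.1, (hpow n).2.2]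

end Generation

section KdV

open LieSubalgebra Submodule

noncomputable def kdvM (y z : Matrix (Fin 2) (Fin 2) ℂ[X]) (u : ℂ) :
    Matrix (Fin 2) (Fin 2) ℂ[X] :=
  (-(1/2 : ℂ)) • y + ((1/2 : ℂ) • (X : ℂ[X])) • z + ((1/3 : ℂ) * u) • z

variable {y z h : Matrix (Fin 2) (Fin 2) ℂ[X]}

theorem kdvM_sub_kdvM (u u' : ℂ) : kdvM y z u - kdvM y z u' = ((u - u') / 3) • z := by
  simp only [kdvM, add_sub_add_left_eq_sub, ← sub_smul]
  congr 1; ring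

theorem lie_kdvM (t : IsSl2Triple h y z) (u : ℂ) : ⁅z, kdvM y z u⁆ = (1/2 : ℂ) • h := by
  have hzy : ⁅z, y⁆ = -h := by rw [← lie_skew, t.lie_e_f]
  simp only [kdvM, lie_add, lie_smul, hzy, lie_self, smul_zero, add_zero, smul_neg, neg_smul,
    neg_neg, lie_neg]

theorem lie_kdvM_zero (t : IsSl2Triple h y z) : ⁅h, kdvM y z 0⁆ = -(y + (X : ℂ[X]) • z) := by
  simp only [kdvM, lie_add, lie_smul, t.lie_h_e_smul ℂ, t.lie_lie_smul_f ℂ, mul_zero, zero_smul,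
    add_zero, smul_neg]
  rw [smul_assoc, smul_comm (X : ℂ[X]) (2 : ℂ) z, smul_smul, smul_smul]
  norm_num
  abel

theorem toSubmodule_lieSpan_kdvM_sub :
    (lieSpan ℂ _ {a | ∃ u u' : ℂ, a = kdvM y z u - kdvM y z u'}).toSubmodule = span ℂ {z} := by
  refine toSubmodule_lieSpan_eq (fun _ hx _ hy => lie_mem_span_singleton hx hy) ?_ ?_
  · rintro _ ⟨u, u', rfl⟩
    rw [kdvM_sub_kdvM]
    exact smul_mem _ _ (mem_span_singleton_self z)
  · refine span_le.2 (Set.singleton_subset_iff.2 ?_)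
    have h3 : (3 : ℂ) • (kdvM y z 1 - kdvM y z 0) = z := by
      rw [kdvM_sub_kdvM, smul_smul]; norm_num
    have hmem := LieSubalgebra.smul_mem _ (3 : ℂ)
      (subset_lieSpan (R := ℂ) (s := {a | ∃ u u' : ℂ, a = kdvM y z u - kdvM y z u'}) ⟨1, 0, rfl⟩)
    rwa [h3] at hmem

theorem toSubmodule_adjoinLieBrackets_kdvM_of_eq_span_singleton (t : IsSl2Triple h y z)
    {g : LieSubalgebra ℂ (Matrix (Fin 2) (Fin 2) ℂ[X])} (hg : g.toSubmodule = span ℂ {z}) :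
    (g.adjoinLieBrackets (kdvM y z)).toSubmodule = span ℂ {z, h} := by
  have hg' (x) : x ∈ g ↔ x ∈ span ℂ {z} := by rw [← hg]; rfl
  have hh : h ∈ span ℂ {z, h} := subset_span (by simp)
  refine toSubmodule_adjoinLieBrackets_eq (fun _ hx _ hy => lie_mem_span_pair ?_ hx hy) ?_ ?_ ?_
  · rw [← lie_skew, t.lie_lie_smul_f ℂ, neg_neg]
    exact smul_mem _ _ (subset_span (by simp))
  · exact hg ▸ span_mono (by simp)
  · intro x hx u
    obtain ⟨c, rfl⟩ := mem_span_singleton.1 ((hg' x).1 hx)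
    rw [smul_lie, lie_kdvM t]
    exact smul_mem _ _ (smul_mem _ _ hh)
  · have hz : z ∈ g := (hg' z).2 (mem_span_singleton_self z)
    have : (2 : ℂ) • ⁅z, kdvM y z 0⁆ = h := by rw [lie_kdvM t, smul_smul]; norm_num
    rw [span_le, Set.insert_subset_iff, Set.singleton_subset_iff]
    exact ⟨le_adjoinLieBrackets hz, this ▸ smul_mem _ _ (lie_mem_adjoinLieBrackets hz 0)⟩

theorem toSubmodule_adjoinLieBrackets_kdvM_of_eq_span_pair (hy : y = single 0 1 1)
    (hz : z = single 1 0 1) (hh : h = single 0 0 1 - single 1 1 1)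
    {g : LieSubalgebra ℂ (Matrix (Fin 2) (Fin 2) ℂ[X])} (hg : g.toSubmodule = span ℂ {z, h}) :
    (g.adjoinLieBrackets (kdvM y z)).toSubmodule =
      LinearMap.ker (traceLinearMap (Fin 2) ℂ ℂ[X]) := by
  have t : IsSl2Triple h y z := by subst hy hz hh; exact isSl2Triple_single
  have hg' (x) : x ∈ g ↔ x ∈ span ℂ {z, h} := by rw [← hg]; rfl
  refine toSubmodule_adjoinLieBrackets_eq
    (fun x _ y _ => LieAlgebra.matrix_trace_commutator_zero _ _ x y) ?_
    (fun x _ u => LieAlgebra.matrix_trace_commutator_zero _ _ x _) ?_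
  · rw [hg, span_le, Set.insert_subset_iff, Set.singleton_subset_iff]
    subst hy hz hh
    simp
  set g' := g.adjoinLieBrackets (kdvM y z)
  have hzg : z ∈ g' := le_adjoinLieBrackets ((hg' z).2 (subset_span (by simp)))
  have hhg : h ∈ g := (hg' h).2 (subset_span (by simp))
  have hwg : y + (X : ℂ[X]) • z ∈ g' := by
    simpa [lie_kdvM_zero t] using g'.neg_mem (lie_mem_adjoinLieBrackets hhg 0)
  -- `y` and `X • z` have `h`-weights `2` and `-2`
  have hyg : y ∈ g' := by
    have hy :
        y = (1 / 4 : ℂ) • (⁅h, y + (X : ℂ[X]) • z⁆ + (2 : ℂ) • (y + (X : ℂ[X]) • z)) := by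
      rw [lie_add, t.lie_h_e_smul ℂ, lie_smul, t.lie_lie_smul_f ℂ, smul_neg,
        smul_comm (X : ℂ[X]) (2 : ℂ) z]
      generalize (X : ℂ[X]) • z = m
      module
    rw [hy]
    exact g'.smul_mem _ (add_mem (g'.lie_mem (le_adjoinLieBrackets hhg) hwg) (g'.smul_mem _ hwg))
  have hXzg : (X : ℂ[X]) • z ∈ g' := by simpa using sub_mem hwg hyg
  subst hy hz hh
  exact ker_traceLinearMap_le_of_mem hyg hzg hXzg

end KdV

theorem stmt2
    (y z h : Matrix (Fin 2) (Fin 2) ℂ[X])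
    (hy : y = Matrix.single 0 1 1)
    (hz : z = Matrix.single 1 0 1)
    (hh : h = Matrix.single 0 0 1 - Matrix.single 1 1 1)
    (M : ℂ → Matrix (Fin 2) (Fin 2) ℂ[X])
    (hM : ∀ u : ℂ, M u = (-(1/2 : ℂ)) • y + ((1/2 : ℂ) • (X : ℂ[X])) • z
        + ((1/3 : ℂ) * u) • z)
    (g1 g2 g3 : LieSubalgebra ℂ (Matrix (Fin 2) (Fin 2) ℂ[X]))
    (hg1 : g1 = LieSubalgebra.lieSpan ℂ _ {a | ∃ u u' : ℂ, a = M u - M u'})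
    (hg2 : g2 = LieSubalgebra.lieSpan ℂ _
      ((g1 : Set (Matrix (Fin 2) (Fin 2) ℂ[X]))
        ∪ {a | ∃ x ∈ g1, ∃ u : ℂ, a = ⁅x, M u⁆}))
    (hg3 : g3 = LieSubalgebra.lieSpan ℂ _
      ((g2 : Set (Matrix (Fin 2) (Fin 2) ℂ[X]))
        ∪ {a | ∃ x ∈ g2, ∃ u : ℂ, a = ⁅x, M u⁆})) :
    g1.toSubmodule = Submodule.span ℂ {z}
    ∧ g2.toSubmodule = Submodule.span ℂ {z, h}
    ∧ g3.toSubmodule = LinearMap.ker (Matrix.traceLinearMap (Fin 2) ℂ ℂ[X]) := by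
  obtain rfl : M = kdvM y z := funext hM
  have t : IsSl2Triple h y z := by subst hy hz hh; exact isSl2Triple_single
  have h1 : g1.toSubmodule = Submodule.span ℂ {z} := hg1 ▸ toSubmodule_lieSpan_kdvM_sub
  have h2 : g2.toSubmodule = Submodule.span ℂ {z, h} :=
    hg2 ▸ toSubmodule_adjoinLieBrackets_kdvM_of_eq_span_singleton t h1
  exact ⟨h1, h2, hg3 ▸ toSubmodule_adjoinLieBrackets_kdvM_of_eq_span_pair hy hz hh h2⟩
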